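/- arXiv:2101.01385 — 4 statements merged into one kernel-verified Lean document; each statement's English description precedes it below -/
import Mathlib

section
/- Let n, m be positive natural numbers, λ ∈ ℝ, δ > 0, T > 0. Let A₁ : [0,T] → ℝ^{n×n} and B : [0,T] → ℝ^{n×m} be continuous, let A₃ ∈ ℝ^{n×n} be a constant matrix, and define A₂(t) := e^{λδ}(λ Iₙ + A₁(t) + e^{λδ} A₃) A₃. Let π : [0,T] → ℝᵐ be continuous and let X : ℝ → ℝⁿ be continuous and differentiable on (0,T) with X'(t) = A₁(t) X(t) + A₂(t) Y(t) + A₃ X(t−δ) + B(t) π(t) for all t ∈ (0,T), where Y(t) := ∫_{-δ}^{0} e^{λs} X(t+s) ds. Then the process S(t) := X(t) + e^{λδ} A₃ Y(t) is differentiable on (0,T) and satisfies the delay-free linear equation S'(t) = (A₁(t) + e^{λδ} A₃) S(t) + B(t) π(t) for all t ∈ (0,T). -/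
/-!
Writing `Y(t) = e^{-λt} ∫_{t-δ}^t e^{λs} X(s) ds` (with `λ = L`) and differentiating gives
`Y' = X - e^{-λδ} X(t-δ) - λ Y`. In `S' = X' + e^{λδ} A₃ Y'` the discrete delay terms
`A₃ X(t-δ)` cancel, and the structural relation on `A₂` turns `A₂ Y - λ e^{λδ} A₃ Y` into
`e^{λδ} (A₁ + e^{λδ} A₃) A₃ Y`, so that `S'` is expressed through `S` alone.
-/

open MeasureTheory intervalIntegral Matrix

section DistributedDelay

variable {E : Type*} [NormedAddCommGroup E] [NormedSpace ℝ E]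

theorem Continuous.hasDerivAt_integral_sub_const_self [CompleteSpace E] {f : ℝ → E}
    (hf : Continuous f) (δ t : ℝ) :
    HasDerivAt (fun u => ∫ s in (u - δ)..u, f s) (f t - f (t - δ)) t := by
  have hupper := (hf.integral_hasStrictDerivAt 0 t).hasDerivAt
  have hlower := (hf.integral_hasStrictDerivAt 0 (t - δ)).hasDerivAt.comp_sub_const t δ
  refine (hupper.sub hlower).congr_of_eventuallyEq (Filter.Eventually.of_forall fun u => ?_)
  exact (integral_interval_sub_left (hf.intervalIntegrable _ _) (hf.intervalIntegrable _ _)).symm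

noncomputable def distributedDelay (L δ : ℝ) (X : ℝ → E) (t : ℝ) : E :=
  ∫ s in (-δ)..0, Real.exp (L * s) • X (t + s)

theorem distributedDelay_eq_exp_smul_integral (L δ : ℝ) (X : ℝ → E) (t : ℝ) :
    distributedDelay L δ X t =
      Real.exp (-(L * t)) • ∫ s in (t - δ)..t, Real.exp (L * s) • X s := by
  have hshift := integral_comp_add_right (a := -δ) (b := 0) (fun s => Real.exp (L * s) • X s) t
  rw [neg_add_eq_sub, zero_add] at hshift
  rw [distributedDelay, ← hshift, ← intervalIntegral.integral_smul]
  refine integral_congr fun s _ => ?_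
  rw [smul_smul, ← Real.exp_add, add_comm t s]
  ring_nf

theorem hasDerivAt_distributedDelay [CompleteSpace E] (L δ : ℝ) {X : ℝ → E}
    (hX : Continuous X) (t : ℝ) :
    HasDerivAt (distributedDelay L δ X)
      (X t - Real.exp (-(L * δ)) • X (t - δ) - L • distributedDelay L δ X t) t := by
  have hexp : HasDerivAt (fun u => Real.exp (-(L * u))) (-L * Real.exp (-(L * t))) t := by
    simpa [mul_comm] using ((hasDerivAt_id t).const_mul L).neg.exp
  have hwindow := (show Continuous fun s => Real.exp (L * s) • X s by fun_prop)
    |>.hasDerivAt_integral_sub_const_self δ t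
  have h := (hexp.smul hwindow).congr_of_eventuallyEq
    (Filter.Eventually.of_forall (distributedDelay_eq_exp_smul_integral L δ X))
  convert h using 1
  have hnow : Real.exp (-(L * t)) * Real.exp (L * t) = 1 := by
    rw [← Real.exp_add, neg_add_cancel, Real.exp_zero]
  have hdelayed : Real.exp (-(L * t)) * Real.exp (L * (t - δ)) = Real.exp (-(L * δ)) := by
    rw [← Real.exp_add]; ring_nf
  rw [distributedDelay_eq_exp_smul_integral]
  simp only [smul_sub, smul_smul, hnow, hdelayed, one_smul]
  module

end DistributedDelay

theorem lq_delay_reduction_general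
    (n m : ℕ) (L δ T : ℝ)
    (A₁ : ℝ → Matrix (Fin n) (Fin n) ℝ) (B : ℝ → Matrix (Fin n) (Fin m) ℝ)
    (A₃ : Matrix (Fin n) (Fin n) ℝ)
    (A₂ : ℝ → Matrix (Fin n) (Fin n) ℝ)
    (hA₂ : ∀ t, A₂ t =
      Real.exp (L * δ) • ((L • (1 : Matrix (Fin n) (Fin n) ℝ) + A₁ t + Real.exp (L * δ) • A₃) * A₃))
    (π : ℝ → Fin m → ℝ)
    (X : ℝ → Fin n → ℝ) (hX : Continuous X)
    (Y : ℝ → Fin n → ℝ)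
    (hY : ∀ t, Y t = ∫ s in (-δ)..0, Real.exp (L * s) • X (t + s))
    (hX' : ∀ t ∈ Set.Ioo (0 : ℝ) T,
      HasDerivAt X (A₁ t *ᵥ X t + A₂ t *ᵥ Y t + A₃ *ᵥ X (t - δ) + B t *ᵥ π t) t) :
    ∀ t ∈ Set.Ioo (0 : ℝ) T,
      HasDerivAt (fun u => X u + Real.exp (L * δ) • (A₃ *ᵥ Y u))
        ((A₁ t + Real.exp (L * δ) • A₃) *ᵥ (X t + Real.exp (L * δ) • (A₃ *ᵥ Y t))
          + B t *ᵥ π t) t := by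
  intro t ht
  obtain rfl : Y = distributedDelay L δ X := funext hY
  have hA₃Y := A₃.mulVecLin.toContinuousLinearMap.hasFDerivAt.comp_hasDerivAt t
    (hasDerivAt_distributedDelay L δ hX t)
  refine ((hX' t ht).add (hA₃Y.const_smul (Real.exp (L * δ)))).congr_deriv ?_
  rw [hA₂ t]
  simp only [LinearMap.coe_toContinuousLinearMap', mulVecLin_apply,
    add_mulVec, smul_mulVec, mulVec_add, mulVec_sub, mulVec_smul, ← mulVec_mulVec, one_mulVec,
    smul_sub, smul_smul, ← Real.exp_add, add_neg_cancel, Real.exp_zero, one_smul]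
  module

/-- Deterministic reduction of the linear-quadratic problem with delay:
if `A₂(t) = e^{λδ}(λ Iₙ + A₁(t) + e^{λδ} A₃) A₃` and
`X'(t) = A₁(t) X(t) + A₂(t) Y(t) + A₃ X(t-δ) + B(t) π(t)` on `(0,T)`, where
`Y(t) = ∫_{-δ}^0 e^{λ s} X(t+s) ds`, then `S = X + e^{λδ} A₃ Y` satisfies the delay-free
equation `S'(t) = (A₁(t) + e^{λδ} A₃) S(t) + B(t) π(t)` on `(0,T)`. -/
theorem lq_delay_reduction
    (n m : ℕ) (hn : 0 < n) (hm : 0 < m) (L δ T : ℝ) (hδ : 0 < δ) (hT : 0 < T)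
    (A₁ : ℝ → Matrix (Fin n) (Fin n) ℝ) (B : ℝ → Matrix (Fin n) (Fin m) ℝ)
    (hA₁ : ContinuousOn A₁ (Set.Icc 0 T)) (hB : ContinuousOn B (Set.Icc 0 T))
    (A₃ : Matrix (Fin n) (Fin n) ℝ)
    (A₂ : ℝ → Matrix (Fin n) (Fin n) ℝ)
    (hA₂ : ∀ t, A₂ t =
      Real.exp (L * δ) • ((L • (1 : Matrix (Fin n) (Fin n) ℝ) + A₁ t + Real.exp (L * δ) • A₃) * A₃))
    (π : ℝ → Fin m → ℝ) (hπ : ContinuousOn π (Set.Icc 0 T))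
    (X : ℝ → Fin n → ℝ) (hX : Continuous X)
    (Y : ℝ → Fin n → ℝ)
    (hY : ∀ t, Y t = ∫ s in (-δ)..0, Real.exp (L * s) • X (t + s))
    (hX' : ∀ t ∈ Set.Ioo (0 : ℝ) T,
      HasDerivAt X (A₁ t *ᵥ X t + A₂ t *ᵥ Y t + A₃ *ᵥ X (t - δ) + B t *ᵥ π t) t) :
    ∀ t ∈ Set.Ioo (0 : ℝ) T,
      HasDerivAt (fun u => X u + Real.exp (L * δ) • (A₃ *ᵥ Y u))
        ((A₁ t + Real.exp (L * δ) • A₃) *ᵥ (X t + Real.exp (L * δ) • (A₃ *ᵥ Y t))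
          + B t *ᵥ π t) t :=
  lq_delay_reduction_general n m L δ T A₁ B A₃ A₂ hA₂ π X hX Y hY hX'
end

section
/- Let λ > 0, μ₁, μ₂, r ∈ ℝ, T > 0, and let η ∈ ℝ satisfy η² + (r+λ)η = μ₂. Let π, c : [0,T] → ℝ be continuous. Let X : ℝ → ℝ be continuous, bounded on (−∞, T], and differentiable on (0,T) with X'(t) = ((μ₁ − r)π(t) − c(t) + r) X(t) + μ₂ Y(t) for all t ∈ (0,T), where Y(t) := ∫_{-∞}^{0} e^{λs} X(t+s) ds. Then S(t) := X(t) + η Y(t) is differentiable on (0,T) and satisfies the delay-free equation S'(t) = ((μ₁ − r)π(t) − c(t)) X(t) + (r + η) S(t) for all t ∈ (0,T). -/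
/-!
Substituting `u = t + s` gives `Y(t) = e^{-λt} ∫_{-∞}^t e^{λu} X(u) du`, so `Y' = X - λY`.
Hence `(X + ηY)' = ((μ₁ - r)π - c)X + (r + η)X + (μ₂ - λη)Y`, and `μ₂ - λη = η² + rη`
is exactly what makes the last two terms `(r + η)(X + ηY)`.
-/

open MeasureTheory Set Filter Topology

noncomputable def expDelay (L : ℝ) (X : ℝ → ℝ) (t : ℝ) : ℝ :=
  ∫ s in Iic (0 : ℝ), Real.exp (L * s) * X (t + s)

section Iic

variable {E : Type*} [NormedAddCommGroup E] [NormedSpace ℝ E]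

theorem setIntegral_Iic_comp_add_left (f : ℝ → E) (t a : ℝ) :
    ∫ s in Iic a, f (t + s) = ∫ u in Iic (t + a), f u := by
  have hpre : (fun s => t + s) ⁻¹' Iic (t + a) = Iic a := by
    ext s
    simp
  rw [← hpre]
  exact (measurePreserving_add_left volume t).setIntegral_preimage_emb
    (measurableEmbedding_addLeft t) f _

theorem hasDerivAt_setIntegral_Iic [CompleteSpace E] {f : ℝ → E} {t b : ℝ}
    (hf : IntegrableOn f (Iic b)) (ht : t < b) (hft : ContinuousAt f t) :
    HasDerivAt (fun a => ∫ u in Iic a, f u) (f t) t := by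
  have hmeas : StronglyMeasurableAtFilter f (𝓝 t) :=
    AEStronglyMeasurable.stronglyMeasurableAtFilter_of_mem hf.aestronglyMeasurable
      (Iic_mem_nhds ht)
  have hsplit : (fun a => (∫ u in Iic t, f u) + ∫ u in t..a, f u) =ᶠ[𝓝 t]
      fun a => ∫ u in Iic a, f u := by
    filter_upwards [Iic_mem_nhds ht] with a ha
    rw [← intervalIntegral.integral_Iic_sub_Iic (hf.mono_set (Iic_subset_Iic.2 ht.le))
      (hf.mono_set (Iic_subset_Iic.2 ha)), add_sub_cancel]
  exact ((intervalIntegral.integral_hasDerivAt_right IntervalIntegrable.refl hmeas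
    hft).const_add _).congr_of_eventuallyEq hsplit.symm

end Iic

theorem integrableOn_exp_mul_mul_Iic {L a M : ℝ} (hL : 0 < L) {f : ℝ → ℝ}
    (hf : AEStronglyMeasurable f (volume.restrict (Iic a))) (hM : ∀ u ≤ a, |f u| ≤ M) :
    IntegrableOn (fun u => Real.exp (L * u) * f u) (Iic a) :=
  (integrableOn_exp_mul_Iic hL a).mul_bdd hf <|
    (ae_restrict_iff' measurableSet_Iic).2 (ae_of_all _ hM)

theorem expDelay_eq (L : ℝ) (X : ℝ → ℝ) (t : ℝ) :
    expDelay L X t = Real.exp (-(L * t)) * ∫ u in Iic t, Real.exp (L * u) * X u := by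
  have hshift : ∀ s, Real.exp (L * s) * X (t + s)
      = Real.exp (-(L * t)) * (Real.exp (L * (t + s)) * X (t + s)) := by
    intro s
    rw [← mul_assoc, ← Real.exp_add]
    ring_nf
  simp only [expDelay, hshift, integral_const_mul]
  rw [setIntegral_Iic_comp_add_left (fun u => Real.exp (L * u) * X u), add_zero]

theorem hasDerivAt_expDelay {L T M t : ℝ} (hL : 0 < L) {X : ℝ → ℝ} (hX : Continuous X)
    (hM : ∀ u ≤ T, |X u| ≤ M) (ht : t < T) :
    HasDerivAt (expDelay L X) (X t - L * expDelay L X t) t := by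
  have hcont : Continuous fun u => Real.exp (L * u) * X u := by fun_prop
  have hint : HasDerivAt (fun a => ∫ u in Iic a, Real.exp (L * u) * X u)
      (Real.exp (L * t) * X t) t :=
    hasDerivAt_setIntegral_Iic
      (integrableOn_exp_mul_mul_Iic hL hX.aestronglyMeasurable.restrict hM) ht
      hcont.continuousAt
  have hexp : HasDerivAt (fun u => Real.exp (-(L * u))) (-L * Real.exp (-(L * t))) t := by
    simpa [mul_comm] using ((hasDerivAt_id t).const_mul L).neg.exp
  have hcancel : Real.exp (-(L * t)) * Real.exp (L * t) = 1 := by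
    rw [← Real.exp_add, neg_add_cancel, Real.exp_zero]
  rw [show expDelay L X = _ from funext (expDelay_eq L X)]
  exact (hexp.mul hint).congr_deriv (by linear_combination X t * hcancel)

theorem portfolio_delay_reduction_general
    (L μ₁ μ₂ r η T : ℝ) (hL : 0 < L)
    (hη : η ^ 2 + (r + L) * η = μ₂)
    (π c : ℝ → ℝ)
    (X : ℝ → ℝ) (hX : Continuous X) (hXb : ∃ M : ℝ, ∀ t ≤ T, |X t| ≤ M)
    (Y : ℝ → ℝ) (hY : ∀ t, Y t = ∫ s in Set.Iic (0 : ℝ), Real.exp (L * s) * X (t + s))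
    (hX' : ∀ t ∈ Set.Ioo (0 : ℝ) T,
      HasDerivAt X (((μ₁ - r) * π t - c t + r) * X t + μ₂ * Y t) t) :
    ∀ t ∈ Set.Ioo (0 : ℝ) T,
      HasDerivAt (fun u => X u + η * Y u)
        (((μ₁ - r) * π t - c t) * X t + (r + η) * (X t + η * Y t)) t := by
  obtain ⟨M, hM⟩ := hXb
  obtain rfl : Y = expDelay L X := funext hY
  intro t ht
  refine ((hX' t ht).add ((hasDerivAt_expDelay hL hX hM ht.2).const_mul η)).congr_deriv ?_
  linear_combination (-expDelay L X t) * hη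

/-- Deterministic reduction of the portfolio optimization problem with
complete memory: if `η² + (r+λ)η = μ₂` and
`X'(t) = ((μ₁ - r)π(t) - c(t) + r) X(t) + μ₂ Y(t)` on `(0,T)`, where
`Y(t) = ∫_{-∞}^0 e^{λ s} X(t+s) ds` and `X` is continuous and bounded on `(-∞,T]`,
then `S = X + η Y` satisfies the delay-free equation
`S'(t) = ((μ₁-r)π(t) - c(t)) X(t) + (r+η) S(t)` on `(0,T)`. -/
theorem portfolio_delay_reduction
    (L μ₁ μ₂ r η T : ℝ) (hL : 0 < L) (hT : 0 < T)
    (hη : η ^ 2 + (r + L) * η = μ₂)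
    (π c : ℝ → ℝ) (hπ : ContinuousOn π (Set.Icc 0 T)) (hc : ContinuousOn c (Set.Icc 0 T))
    (X : ℝ → ℝ) (hX : Continuous X) (hXb : ∃ M : ℝ, ∀ t ≤ T, |X t| ≤ M)
    (Y : ℝ → ℝ) (hY : ∀ t, Y t = ∫ s in Set.Iic (0 : ℝ), Real.exp (L * s) * X (t + s))
    (hX' : ∀ t ∈ Set.Ioo (0 : ℝ) T,
      HasDerivAt X (((μ₁ - r) * π t - c t + r) * X t + μ₂ * Y t) t) :
    ∀ t ∈ Set.Ioo (0 : ℝ) T,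
      HasDerivAt (fun u => X u + η * Y u)
        (((μ₁ - r) * π t - c t) * X t + (r + η) * (X t + η * Y t)) t :=
  portfolio_delay_reduction_general L μ₁ μ₂ r η T hL hη π c X hX hXb Y hY hX'
end

section
/- Let n, m be positive natural numbers and T > 0. Let Ā : [0,T] → ℝ^{n×n}, B : [0,T] → ℝ^{n×m}, Q : [0,T] → ℝ^{n×n}, R : [0,T] → ℝ^{m×m} be continuous, with Q(t) symmetric positive semi-definite and R(t) symmetric positive definite for each t, and let G ∈ ℝ^{n×n} be symmetric positive semi-definite. Suppose P : [0,T] → ℝ^{n×n} is continuously differentiable with P(t) symmetric for each t, P(T) = G, and P'(t) = P(t) B(t) R(t)⁻¹ B(t)ᵀ P(t) − Ā(t)ᵀ P(t) − P(t) Ā(t) − Q(t) on [0,T]. Then P(t) is positive semi-definite for every t ∈ [0,T]. -/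
/-!
Since `P B R⁻¹ Bᵀ P - Āᵀ P - P Ā = -Āᵀ P - P (Ā - B R⁻¹ Bᵀ P)`, the Riccati equation is a
differential Sylvester equation `P' = -N P - P M - Q` whose coefficients `N = Āᵀ` and
`M = Ā - B R⁻¹ Bᵀ P` are continuous, hence satisfy `|x ⬝ᵥ (N + M) x| ≤ C |x|²`. For such an
equation a maximum principle holds. Perturb `P` to `K = P + ε e^{-(C+1)(t-T)} I`, which is positive
definite at `T`. If `K` failed to be positive definite somewhere, at the last such time `t₁` it
would be positive semi-definite with a null vector `x`, so `P(t₁) x = -c x` with `c > 0`, and the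
equation gives `d/dt (x ⬝ᵥ K x) = c x ⬝ᵥ (N + M) x - x ⬝ᵥ Q x - (C+1) c |x|² < 0` at `t₁`, although
`x ⬝ᵥ K x` vanishes at `t₁` and is positive just after it. Letting `ε → 0` gives the claim.
-/

open Matrix

attribute [local instance] Matrix.normedAddCommGroup Matrix.normedSpace

open Set Filter Topology

namespace Matrix

variable {ι : Type*} [Fintype ι]

theorem isClosed_setOf_posSemidef : IsClosed {A : Matrix ι ι ℝ | A.PosSemidef} := by
  simp only [posSemidef_iff_dotProduct_mulVec, ofPred_and, ofPred_forall]
  exact (isClosed_eq continuous_id.matrix_conjTranspose continuous_id).inter <|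
    isClosed_iInter fun x => isClosed_le continuous_const <|
      continuous_const.dotProduct (continuous_id.matrix_mulVec continuous_const)

theorem posDef_iff_forall_norm_eq_one {A : Matrix ι ι ℝ} :
    A.PosDef ↔ A.IsHermitian ∧ ∀ x : ι → ℝ, ‖x‖ = 1 → 0 < x ⬝ᵥ A *ᵥ x := by
  simp only [posDef_iff_dotProduct_mulVec, star_trivial]
  refine and_congr_right fun _ => ⟨fun h x hx => h (ne_zero_of_norm_ne_zero (by simp [hx])),
    fun h x hx => ?_⟩
  have hx' : 0 < ‖x‖⁻¹ := inv_pos.mpr (norm_pos_iff.mpr hx)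
  have := h _ (norm_smul_inv_norm (𝕜 := ℝ) hx)
  rw [mulVec_smul, dotProduct_smul, smul_dotProduct, smul_eq_mul, smul_eq_mul] at this
  exact pos_of_mul_pos_right (pos_of_mul_pos_right this hx'.le) hx'.le

theorem abs_dotProduct_mulVec_le (A : Matrix ι ι ℝ) (x : ι → ℝ) :
    |x ⬝ᵥ A *ᵥ x| ≤ Fintype.card ι ^ 2 * ‖A‖ * (x ⬝ᵥ x) := by
  have hsq : ∀ i, x i ^ 2 ≤ x ⬝ᵥ x := fun i =>
    (sq (x i)).trans_le <| Finset.single_le_sum (f := fun j => x j * x j)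
      (fun j _ => mul_self_nonneg _) (Finset.mem_univ i)
  calc |x ⬝ᵥ A *ᵥ x| = |∑ i, ∑ j, A i j * (x i * x j)| := by
        simp only [dotProduct, mulVec, Finset.mul_sum]; congr 1
        refine Finset.sum_congr rfl fun i _ => Finset.sum_congr rfl fun j _ => by ring
    _ ≤ ∑ i : ι, ∑ j : ι, ‖A‖ * (x ⬝ᵥ x) := by
        refine (Finset.abs_sum_le_sum_abs _ _).trans <| Finset.sum_le_sum fun i _ =>
          (Finset.abs_sum_le_sum_abs _ _).trans <| Finset.sum_le_sum fun j _ => ?_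
        rw [abs_mul, abs_mul]
        refine mul_le_mul (norm_entry_le_entrywise_sup_norm A) ?_ (by positivity) (norm_nonneg A)
        nlinarith [hsq i, hsq j, sq_abs (x i), sq_abs (x j), two_mul_le_add_sq |x i| |x j|]
    _ = Fintype.card ι ^ 2 * ‖A‖ * (x ⬝ᵥ x) := by
        simp only [Finset.sum_const, Finset.card_univ, nsmul_eq_mul]; ring

theorem dotProduct_mul_add_mul_mulVec_of_mulVec_eq_smul {P N M : Matrix ι ι ℝ} (hP : P.IsSymm)
    {x : ι → ℝ} {μ : ℝ} (hx : P *ᵥ x = μ • x) :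
    x ⬝ᵥ (N * P + P * M) *ᵥ x = μ * (x ⬝ᵥ (N + M) *ᵥ x) := by
  have hxP : x ᵥ* P = μ • x := by rw [← mulVec_transpose, hP.eq, hx]
  rw [add_mulVec, add_mulVec, ← mulVec_mulVec, ← mulVec_mulVec, hx, dotProduct_add,
    dotProduct_mulVec x P, hxP, mulVec_smul, dotProduct_smul, smul_dotProduct, smul_eq_mul,
    smul_eq_mul, dotProduct_add, mul_add]

theorem exists_last_not_posDef {K : ℝ → Matrix ι ι ℝ} {a b t₀ : ℝ}
    (hK : ContinuousOn K (Icc a b)) (hKherm : ∀ t ∈ Icc a b, (K t).IsHermitian)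
    (hKb : (K b).PosDef) (ht₀ : t₀ ∈ Icc a b) (hKt₀ : ¬ (K t₀).PosDef) :
    ∃ t₁ ∈ Ico a b, ∃ x ≠ 0, K t₁ *ᵥ x = 0 ∧ ∀ t ∈ Ioc t₁ b, (K t).PosDef := by
  set S := Icc a b ×ˢ Metric.sphere (0 : ι → ℝ) 1 ∩
    (fun p => p.2 ⬝ᵥ K p.1 *ᵥ p.2) ⁻¹' Iic 0
  have hS : IsCompact S := by
    refine (isCompact_Icc.prod (isCompact_sphere 0 1)).of_isClosed_subset
      (ContinuousOn.preimage_isClosed_of_isClosed ?_ (isClosed_Icc.prod Metric.isClosed_sphere)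
        isClosed_Iic) inter_subset_left
    exact (continuous_snd.dotProduct (continuous_fst.matrix_mulVec continuous_snd)
      ).comp_continuousOn ((hK.comp continuousOn_fst fun p hp => hp.1).prodMk continuousOn_snd)
  have hbad : ∀ t ∈ Icc a b, ¬ (K t).PosDef → ∃ u, (t, u) ∈ S := fun t ht hnot => by
    simp only [posDef_iff_forall_norm_eq_one, hKherm t ht, true_and, not_forall, not_lt] at hnot
    obtain ⟨u, hu, hle⟩ := hnot
    exact ⟨u, ⟨ht, by simpa using hu⟩, hle⟩
  obtain ⟨u₀, hu₀⟩ := hbad t₀ ht₀ hKt₀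
  obtain ⟨⟨t₁, x⟩, ⟨⟨ht₁, hx⟩, hxK⟩, hsup⟩ :=
    (hS.image continuous_fst).sSup_mem ⟨t₀, _, hu₀, rfl⟩
  have hlast : ∀ t ∈ Ioc t₁ b, (K t).PosDef := fun t ht => by
    by_contra hnot
    obtain ⟨u, hu⟩ := hbad t ⟨ht₁.1.trans ht.1.le, ht.2⟩ hnot
    exact ht.1.not_ge <|
      (le_csSup (hS.image continuous_fst).bddAbove ⟨_, hu, rfl⟩).trans_eq hsup.symm
  have hx0 : x ≠ 0 := ne_zero_of_norm_ne_zero (by simp_all)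
  have ht₁b : t₁ < b := ht₁.2.lt_of_ne fun h => (h ▸ hxK : x ⬝ᵥ K b *ᵥ x ≤ 0).not_gt <| by
    simpa using hKb.dotProduct_mulVec_pos hx0
  have hpsd : (K t₁).PosSemidef := by
    have : (𝓝[Ioc t₁ b] t₁).NeBot := left_nhdsWithin_Ioc_neBot ht₁b
    exact isClosed_setOf_posSemidef.mem_of_tendsto
      ((hK t₁ ht₁).mono fun t ht => ⟨ht₁.1.trans ht.1.le, ht.2⟩).tendsto
      (eventually_nhdsWithin_of_forall fun t ht => (hlast t ht).posSemidef)
  refine ⟨t₁, ⟨ht₁.1, ht₁b⟩, x, hx0, ?_, hlast⟩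
  refine (hpsd.dotProduct_mulVec_zero_iff x).mp (le_antisymm ?_ ?_)
  · simpa using hxK
  · exact hpsd.dotProduct_mulVec_nonneg x

end Matrix

theorem IsCompact.exists_abs_dotProduct_mulVec_le {X ι : Type*} [TopologicalSpace X] [Fintype ι]
    {s : Set X} (hs : IsCompact s) {A : X → Matrix ι ι ℝ} (hA : ContinuousOn A s) :
    ∃ C, ∀ t ∈ s, ∀ x : ι → ℝ, |x ⬝ᵥ A t *ᵥ x| ≤ C * (x ⬝ᵥ x) := by
  obtain ⟨C, hC⟩ := hs.exists_bound_of_continuousOn hA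
  refine ⟨Fintype.card ι ^ 2 * C, fun t ht x => (abs_dotProduct_mulVec_le _ x).trans ?_⟩
  gcongr
  · exact Finset.sum_nonneg fun i _ => mul_self_nonneg (x i)
  · exact hC t ht

theorem HasDerivWithinAt.dotProduct_mulVec {m n : Type*} [Fintype m] [Fintype n]
    {K : ℝ → Matrix m n ℝ} {K' : Matrix m n ℝ} {s : Set ℝ} {t : ℝ}
    (hK : HasDerivWithinAt K K' s t) (x : m → ℝ) (y : n → ℝ) :
    HasDerivWithinAt (fun t => x ⬝ᵥ K t *ᵥ y) (x ⬝ᵥ K' *ᵥ y) s t :=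
  let L : Matrix m n ℝ →ₗ[ℝ] ℝ :=
    { toFun := fun A => x ⬝ᵥ A *ᵥ y
      map_add' := fun A B => by simp only [add_mulVec, dotProduct_add]
      map_smul' := fun c A => by simp only [smul_mulVec, dotProduct_smul, RingHom.id_apply] }
  L.toContinuousLinearMap.hasFDerivAt.comp_hasDerivWithinAt t hK

theorem HasDerivWithinAt.nonneg_of_isMinOn_Icc {f : ℝ → ℝ} {f' a b : ℝ} (hab : a < b)
    (hf : HasDerivWithinAt f f' (Icc a b) a) (hmin : IsMinOn f (Icc a b) a) : 0 ≤ f' := by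
  have hcone : b - a ∈ posTangentConeAt (Icc a b) a :=
    sub_mem_posTangentConeAt_of_segment_subset (segment_eq_Icc hab.le).subset
  have := hmin.localize.hasFDerivWithinAt_nonneg hf hcone
  rw [ContinuousLinearMap.toSpanSingleton_apply, smul_eq_mul] at this
  exact nonneg_of_mul_nonneg_right this (sub_pos.mpr hab)

theorem ContinuousOn.matrix_inv_of_posDef {ι : Type*} [Fintype ι] [DecidableEq ι]
    {R : ℝ → Matrix ι ι ℝ} {s : Set ℝ} (hRc : ContinuousOn R s) (hR : ∀ t ∈ s, (R t).PosDef) :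
    ContinuousOn (fun t => (R t)⁻¹) s := fun t ht => by
  refine (continuousAt_matrix_inv _ ?_).comp_continuousWithinAt (hRc t ht)
  rw [Ring.inverse_eq_inv']
  exact continuousAt_inv₀ (hR t ht).det_pos.ne'

namespace Matrix

variable {ι : Type*} [Fintype ι] [DecidableEq ι]

theorem posDef_add_exp_smul_one_of_sylvester_ode {a b C ε : ℝ} {P N M Q : ℝ → Matrix ι ι ℝ}
    (hC : ∀ t ∈ Icc a b, ∀ x, x ⬝ᵥ (N t + M t) *ᵥ x ≤ C * (x ⬝ᵥ x))
    (hQ : ∀ t ∈ Icc a b, (Q t).PosSemidef) (hPsymm : ∀ t ∈ Icc a b, (P t).IsSymm)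
    (hPb : (P b).PosSemidef)
    (hP : ∀ t ∈ Icc a b, HasDerivWithinAt P (-(N t * P t) - P t * M t - Q t) (Icc a b) t)
    (hε : 0 < ε) :
    ∀ t ∈ Icc a b, (P t + (ε * Real.exp (-(C + 1) * (t - b))) • 1).PosDef := by
  set c : ℝ → ℝ := fun t => ε * Real.exp (-(C + 1) * (t - b))
  have hc_pos : ∀ t, 0 < c t := fun t => mul_pos hε (Real.exp_pos _)
  have hc_deriv : ∀ t, HasDerivAt c (-(C + 1) * c t) t := fun t => by
    refine ((((hasDerivAt_id t).sub_const b).const_mul (-(C + 1))).exp.const_mul ε).congr_deriv ?_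
    simp only [c, id]; ring
  have hK_deriv : ∀ t ∈ Icc a b, HasDerivWithinAt (fun t => P t + c t • (1 : Matrix ι ι ℝ))
      (-(N t * P t) - P t * M t - Q t + (-(C + 1) * c t) • 1) (Icc a b) t :=
    fun t ht => (hP t ht).add ((hc_deriv t).hasDerivWithinAt.smul_const 1)
  intro t₀ ht₀
  by_contra hnot
  obtain ⟨t₁, ht₁, x, hx0, hKx, hlast⟩ := exists_last_not_posDef
    (fun t ht => (hK_deriv t ht).continuousWithinAt)
    (fun t ht => IsHermitian.add ((conjTranspose_eq_transpose_of_trivial _).trans (hPsymm t ht))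
      (PosDef.one.smul (hc_pos t)).isHermitian)
    (PosDef.posSemidef_add hPb (PosDef.one.smul (hc_pos b))) ht₀ hnot
  have ht₁' : t₁ ∈ Icc a b := Ico_subset_Icc_self ht₁
  have hPx : P t₁ *ᵥ x = (-c t₁) • x := by
    rw [add_mulVec, smul_mulVec, one_mulVec] at hKx
    rw [neg_smul]; exact eq_neg_of_add_eq_zero_left hKx
  have hmin : 0 ≤ x ⬝ᵥ (-(N t₁ * P t₁) - P t₁ * M t₁ - Q t₁ + (-(C + 1) * c t₁) • 1) *ᵥ x := by
    refine (((hK_deriv t₁ ht₁').mono (Icc_subset_Icc_left ht₁.1)).dotProduct_mulVec x x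
      ).nonneg_of_isMinOn_Icc ht₁.2 (isMinOn_iff.2 fun t ht => ?_)
    rcases ht.1.eq_or_lt with rfl | h
    · exact le_rfl
    · rw [hKx, dotProduct_zero]
      simpa using ((hlast t ⟨h, ht.2⟩).dotProduct_mulVec_pos hx0).le
  have hform : x ⬝ᵥ (-(N t₁ * P t₁) - P t₁ * M t₁ - Q t₁ + (-(C + 1) * c t₁) • 1) *ᵥ x =
      c t₁ * (x ⬝ᵥ (N t₁ + M t₁) *ᵥ x) - x ⬝ᵥ Q t₁ *ᵥ x - (C + 1) * c t₁ * (x ⬝ᵥ x) := by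
    rw [show -(N t₁ * P t₁) - P t₁ * M t₁ = -(N t₁ * P t₁ + P t₁ * M t₁) by abel,
      add_mulVec, sub_mulVec, neg_mulVec, dotProduct_add, dotProduct_sub, dotProduct_neg,
      dotProduct_mul_add_mul_mulVec_of_mulVec_eq_smul (hPsymm t₁ ht₁') hPx, smul_mulVec,
      one_mulVec, dotProduct_smul, smul_eq_mul]
    ring
  have hxx : 0 < x ⬝ᵥ x := by simpa using dotProduct_star_self_pos_iff.mpr hx0
  have hQx : 0 ≤ x ⬝ᵥ Q t₁ *ᵥ x := by simpa using (hQ t₁ ht₁').dotProduct_mulVec_nonneg x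
  nlinarith [mul_le_mul_of_nonneg_left (hC t₁ ht₁' x) (hc_pos t₁).le, mul_pos (hc_pos t₁) hxx]

theorem posSemidef_of_sylvester_ode {a b : ℝ} {P N M Q : ℝ → Matrix ι ι ℝ}
    (hN : ContinuousOn N (Icc a b)) (hM : ContinuousOn M (Icc a b))
    (hQ : ∀ t ∈ Icc a b, (Q t).PosSemidef) (hPsymm : ∀ t ∈ Icc a b, (P t).IsSymm)
    (hPb : (P b).PosSemidef)
    (hP : ∀ t ∈ Icc a b, HasDerivWithinAt P (-(N t * P t) - P t * M t - Q t) (Icc a b) t) :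
    ∀ t ∈ Icc a b, (P t).PosSemidef := by
  obtain ⟨C, hC⟩ := isCompact_Icc.exists_abs_dotProduct_mulVec_le (hN.add hM)
  intro t ht
  set e := Real.exp (-(C + 1) * (t - b))
  have hlim : Tendsto (fun ε => P t + (ε * e) • (1 : Matrix ι ι ℝ)) (𝓝[>] 0) (𝓝 (P t)) := by
    have : Continuous fun ε => P t + (ε * e) • (1 : Matrix ι ι ℝ) := by fun_prop
    simpa using (this.tendsto 0).mono_left nhdsWithin_le_nhds
  have hC' : ∀ s ∈ Icc a b, ∀ x, x ⬝ᵥ (N s + M s) *ᵥ x ≤ C * (x ⬝ᵥ x) :=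
    fun s hs x => le_of_abs_le (hC s hs x)
  exact isClosed_setOf_posSemidef.mem_of_tendsto hlim <| eventually_nhdsWithin_of_forall
    fun ε hε => (posDef_add_exp_smul_one_of_sylvester_ode hC' hQ hPsymm hPb hP hε t ht).posSemidef

end Matrix

theorem riccati_posSemidef_general
    (n m : ℕ) (T : ℝ)
    (Abar : ℝ → Matrix (Fin n) (Fin n) ℝ) (B : ℝ → Matrix (Fin n) (Fin m) ℝ)
    (Q : ℝ → Matrix (Fin n) (Fin n) ℝ) (R : ℝ → Matrix (Fin m) (Fin m) ℝ)
    (hAbar : ContinuousOn Abar (Set.Icc 0 T)) (hB : ContinuousOn B (Set.Icc 0 T))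
    (hRc : ContinuousOn R (Set.Icc 0 T))
    (hQ : ∀ t ∈ Set.Icc (0 : ℝ) T, (Q t).PosSemidef)
    (hR : ∀ t ∈ Set.Icc (0 : ℝ) T, (R t).PosDef)
    (G : Matrix (Fin n) (Fin n) ℝ) (hG : G.PosSemidef)
    (P : ℝ → Matrix (Fin n) (Fin n) ℝ)
    (hPsymm : ∀ t ∈ Set.Icc (0 : ℝ) T, (P t).IsSymm)
    (hPT : P T = G)
    (hP : ∀ t ∈ Set.Icc (0 : ℝ) T,
      HasDerivWithinAt P
        (P t * B t * (R t)⁻¹ * (B t)ᵀ * P t - (Abar t)ᵀ * P t - P t * Abar t - Q t)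
        (Set.Icc 0 T) t) :
    ∀ t ∈ Set.Icc (0 : ℝ) T, (P t).PosSemidef := by
  have hPc : ContinuousOn P (Icc 0 T) := fun t ht => (hP t ht).continuousWithinAt
  have hRinv := hRc.matrix_inv_of_posDef hR
  refine posSemidef_of_sylvester_ode (N := fun t => (Abar t)ᵀ)
    (M := fun t => Abar t - B t * (R t)⁻¹ * (B t)ᵀ * P t) (by fun_prop) (by fun_prop) hQ hPsymm
    (hPT ▸ hG) fun t ht => (hP t ht).congr_deriv ?_
  simp only [Matrix.mul_sub, Matrix.mul_assoc]
  abel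

/-- If `P` solves the Riccati equation
`P' = P B R⁻¹ Bᵀ P - ĀᵀP - PĀ - Q` on `[0,T]` with `P(T) = G`, where `Q(t)` is symmetric
positive semi-definite, `R(t)` is symmetric positive definite, and `G` is symmetric positive
semi-definite, then `P(t)` is positive semi-definite for every `t ∈ [0,T]`. -/
theorem riccati_posSemidef
    (n m : ℕ) (hn : 0 < n) (hm : 0 < m) (T : ℝ) (hT : 0 < T)
    (Abar : ℝ → Matrix (Fin n) (Fin n) ℝ) (B : ℝ → Matrix (Fin n) (Fin m) ℝ)
    (Q : ℝ → Matrix (Fin n) (Fin n) ℝ) (R : ℝ → Matrix (Fin m) (Fin m) ℝ)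
    (hAbar : ContinuousOn Abar (Set.Icc 0 T)) (hB : ContinuousOn B (Set.Icc 0 T))
    (hQc : ContinuousOn Q (Set.Icc 0 T)) (hRc : ContinuousOn R (Set.Icc 0 T))
    (hQ : ∀ t ∈ Set.Icc (0 : ℝ) T, (Q t).PosSemidef)
    (hR : ∀ t ∈ Set.Icc (0 : ℝ) T, (R t).PosDef)
    (G : Matrix (Fin n) (Fin n) ℝ) (hG : G.PosSemidef)
    (P : ℝ → Matrix (Fin n) (Fin n) ℝ)
    (hPsymm : ∀ t ∈ Set.Icc (0 : ℝ) T, (P t).IsSymm)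
    (hPT : P T = G)
    (hP : ∀ t ∈ Set.Icc (0 : ℝ) T,
      HasDerivWithinAt P
        (P t * B t * (R t)⁻¹ * (B t)ᵀ * P t - (Abar t)ᵀ * P t - P t * Abar t - Q t)
        (Set.Icc 0 T) t) :
    ∀ t ∈ Set.Icc (0 : ℝ) T, (P t).PosSemidef :=
  riccati_posSemidef_general n m T Abar B Q R hAbar hB hRc hQ hR G hG P hPsymm hPT hP
end

section
/- Let T > 0, γ ∈ (0,1), β ∈ ℝ, and let k : [0,T] → ℝ be continuous. Suppose p : [0,T] → ℝ is continuously differentiable with p(t) > 0 for all t, p(T) = 1, and p'(t) = −(γ/(1−γ)) k(t) p(t) − e^{−βt/(1−γ)} on [0,T]. Then for every continuous c : [0,T] → [0,∞), every s₀ > 0, and every continuously differentiable S : [0,T] → (0,∞) with S(0) = s₀ and S'(t) = k(t) S(t) − c(t) on [0,T], one has ∫_0^T e^{−βt} c(t)^γ / γ dt + S(T)^γ / γ ≤ (1/γ) p(0)^{1−γ} s₀^γ, with equality if c(t) = e^{−βt/(1−γ)} S(t) / p(t) for all t ∈ [0,T]. -/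
/-! Along a trajectory, the candidate value `v = p ^ (1 - γ) * S ^ γ / γ` satisfies
`v' = -(q c + (1 - γ) / γ * q x)`, where `q = p ^ (1 - γ) * S ^ (γ - 1)` is the marginal value of
wealth and `x = e^{-βt/(1-γ)} S / p` the feedback consumption: the terms in `k` cancel thanks to
the equation for `p`. The discount factor is `e^{-βt} = q x ^ (1 - γ)`, so the weighted AM-GM
inequality `c ^ γ x ^ (1 - γ) ≤ γ c + (1 - γ) x` gives `e^{-βt} c ^ γ / γ ≤ -v'`, with equality
at `c = x`. Integrating over `[0, T]` gives the claim. -/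

open MeasureTheory intervalIntegral Set

theorem power_utility_sub_le {γ q x c : ℝ} (hγ0 : 0 < γ) (hγ1 : γ < 1) (hq : 0 ≤ q) (hx : 0 ≤ x)
    (hc : 0 ≤ c) : q * x ^ (1 - γ) * c ^ γ / γ - q * c ≤ (1 - γ) / γ * q * x := by
  have amgm : c ^ γ * x ^ (1 - γ) ≤ γ * c + (1 - γ) * x :=
    Real.geom_mean_le_arith_mean2_weighted hγ0.le (by linarith) hc hx (by ring)
  rw [sub_le_iff_le_add, div_le_iff₀ hγ0]
  calc q * x ^ (1 - γ) * c ^ γ = q * (c ^ γ * x ^ (1 - γ)) := by ring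
    _ ≤ q * (γ * c + (1 - γ) * x) := mul_le_mul_of_nonneg_left amgm hq
    _ = ((1 - γ) / γ * q * x + q * c) * γ := by field_simp; ring

theorem power_utility_sub_self {γ q x : ℝ} (hγ0 : γ ≠ 0) (hx : 0 ≤ x) :
    q * x ^ (1 - γ) * x ^ γ / γ - q * x = (1 - γ) / γ * q * x := by
  rw [mul_assoc q, ← Real.rpow_add' hx (by norm_num), sub_add_cancel, Real.rpow_one]
  field_simp

theorem rpow_mul_rpow_mul_div_rpow_eq_exp {γ P Z : ℝ} (y : ℝ) (hγ1 : γ ≠ 1) (hP : 0 < P)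
    (hZ : 0 < Z) :
    P ^ (1 - γ) * Z ^ (γ - 1) * (Real.exp (y / (1 - γ)) * Z / P) ^ (1 - γ) = Real.exp y := by
  have h1γ : 1 - γ ≠ 0 := sub_ne_zero.2 hγ1.symm
  rw [Real.div_rpow (by positivity) hP.le, Real.mul_rpow (by positivity) hZ.le, ← Real.exp_mul,
    div_mul_cancel₀ y h1γ, ← neg_sub, Real.rpow_neg hZ.le]
  have : 0 < P ^ (1 - γ) := by positivity
  have : 0 < Z ^ (1 - γ) := by positivity
  field_simp

theorem hasDerivWithinAt_value_function {p S : ℝ → ℝ} {s : Set ℝ} {t γ k E c : ℝ} (hγ0 : γ ≠ 0)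
    (hγ1 : γ ≠ 1) (hpt : 0 < p t) (hSt : 0 < S t)
    (hp : HasDerivWithinAt p (-(γ / (1 - γ)) * k * p t - E) s t)
    (hS : HasDerivWithinAt S (k * S t - c) s t) :
    HasDerivWithinAt (fun u => p u ^ (1 - γ) * S u ^ γ / γ)
      (-(p t ^ (1 - γ) * S t ^ (γ - 1) * c
        + (1 - γ) / γ * (p t ^ (1 - γ) * S t ^ (γ - 1)) * (E * S t / p t))) s t := by
  have h1γ : 1 - γ ≠ 0 := sub_ne_zero.2 hγ1.symm
  refine (((hp.rpow_const (Or.inl hpt.ne')).mul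
    (hS.rpow_const (Or.inl hSt.ne'))).div_const γ).congr_deriv ?_
  have hp1 : p t ^ (1 - γ) = p t ^ (1 - γ - 1) * p t := by
    rw [← Real.rpow_add_one hpt.ne', sub_add_cancel]
  have hSγ : S t ^ γ = S t ^ (γ - 1) * S t := by
    rw [← Real.rpow_add_one hSt.ne', sub_add_cancel]
  rw [hp1, hSγ]
  field_simp
  ring

theorem integral_add_le_of_le_neg_deriv {a b : ℝ} {f v v' : ℝ → ℝ} (hab : a ≤ b)
    (hv : ∀ t ∈ Icc a b, HasDerivWithinAt v (v' t) (Icc a b) t) (hf : ContinuousOn f (Icc a b))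
    (hle : ∀ t ∈ Ioo a b, f t ≤ -v' t) : (∫ t in a..b, f t) + v b ≤ v a := by
  have := integral_le_sub_of_hasDeriv_right_of_le hab
    (fun t ht => (hv t ht).continuousWithinAt.neg)
    (fun t ht => ((hv t (Ioo_subset_Icc_self ht)).hasDerivAt
      (Icc_mem_nhds ht.1 ht.2)).hasDerivWithinAt.neg)
    hf.integrableOn_Icc hle
  rw [Pi.neg_apply, Pi.neg_apply] at this
  linarith

theorem integral_add_eq_of_eq_neg_deriv {a b : ℝ} {f v v' : ℝ → ℝ} (hab : a ≤ b)
    (hv : ∀ t ∈ Icc a b, HasDerivWithinAt v (v' t) (Icc a b) t) (hf : ContinuousOn f (Icc a b))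
    (heq : ∀ t ∈ Ioo a b, f t = -v' t) : (∫ t in a..b, f t) + v b = v a := by
  have := integral_eq_sub_of_hasDeriv_right_of_le hab
    (fun t ht => (hv t ht).continuousWithinAt.neg)
    (fun t ht => (heq t ht ▸ ((hv t (Ioo_subset_Icc_self ht)).hasDerivAt
      (Icc_mem_nhds ht.1 ht.2)).hasDerivWithinAt.neg))
    (hf.intervalIntegrable_of_Icc hab)
  rw [Pi.neg_apply, Pi.neg_apply] at this
  linarith

theorem consumption_verification_general
    (T γ β : ℝ) (hT : 0 < T) (hγ0 : 0 < γ) (hγ1 : γ < 1)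
    (k : ℝ → ℝ)
    (p : ℝ → ℝ) (hp_pos : ∀ t ∈ Set.Icc (0 : ℝ) T, 0 < p t) (hpT : p T = 1)
    (hp : ∀ t ∈ Set.Icc (0 : ℝ) T,
      HasDerivWithinAt p (-(γ / (1 - γ)) * k t * p t - Real.exp (-(β * t) / (1 - γ)))
        (Set.Icc 0 T) t) :
    ∀ c : ℝ → ℝ, ContinuousOn c (Set.Icc 0 T) → (∀ t ∈ Set.Icc (0 : ℝ) T, 0 ≤ c t) →
    ∀ s₀ : ℝ, 0 < s₀ →
    ∀ S : ℝ → ℝ, S 0 = s₀ → (∀ t ∈ Set.Icc (0 : ℝ) T, 0 < S t) →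
      (∀ t ∈ Set.Icc (0 : ℝ) T, HasDerivWithinAt S (k t * S t - c t) (Set.Icc 0 T) t) →
      (∫ t in (0 : ℝ)..T, Real.exp (-(β * t)) * c t ^ γ / γ) + S T ^ γ / γ
          ≤ 1 / γ * p 0 ^ (1 - γ) * s₀ ^ γ
        ∧ ((∀ t ∈ Set.Icc (0 : ℝ) T, c t = Real.exp (-(β * t) / (1 - γ)) * S t / p t) →
            (∫ t in (0 : ℝ)..T, Real.exp (-(β * t)) * c t ^ γ / γ) + S T ^ γ / γ
              = 1 / γ * p 0 ^ (1 - γ) * s₀ ^ γ) := by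
  intro c hc hc0 s₀ _ S hS0 hS_pos hS
  set q := fun t => p t ^ (1 - γ) * S t ^ (γ - 1)
  set x := fun t => Real.exp (-(β * t) / (1 - γ)) * S t / p t
  have hv : ∀ t ∈ Icc 0 T, HasDerivWithinAt (fun u => p u ^ (1 - γ) * S u ^ γ / γ)
      (-(q t * c t + (1 - γ) / γ * q t * x t)) (Icc 0 T) t := fun t ht =>
    hasDerivWithinAt_value_function hγ0.ne' hγ1.ne (hp_pos t ht) (hS_pos t ht) (hp t ht) (hS t ht)
  have hdiscount : ∀ t ∈ Icc 0 T, Real.exp (-(β * t)) = q t * x t ^ (1 - γ) := fun t ht =>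
    (rpow_mul_rpow_mul_div_rpow_eq_exp _ hγ1.ne (hp_pos t ht) (hS_pos t ht)).symm
  have hq : ∀ t ∈ Icc 0 T, 0 ≤ q t := fun t ht =>
    have := hp_pos t ht; have := hS_pos t ht; by positivity
  have hx : ∀ t ∈ Icc 0 T, 0 ≤ x t := fun t ht =>
    have := hp_pos t ht; have := hS_pos t ht; by positivity
  have hf : ContinuousOn (fun t => Real.exp (-(β * t)) * c t ^ γ / γ) (Icc 0 T) := by
    refine (ContinuousOn.mul ?_ (hc.rpow_const fun _ _ => Or.inr hγ0.le)).div_const γ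
    fun_prop
  have hvT : p T ^ (1 - γ) * S T ^ γ / γ = S T ^ γ / γ := by
    rw [hpT, Real.one_rpow, one_mul]
  have hv0 : p 0 ^ (1 - γ) * S 0 ^ γ / γ = 1 / γ * p 0 ^ (1 - γ) * s₀ ^ γ := by
    rw [hS0]; ring
  rw [← hvT, ← hv0]
  refine ⟨integral_add_le_of_le_neg_deriv hT.le hv hf fun t ht => ?_,
    fun hfb => integral_add_eq_of_eq_neg_deriv hT.le hv hf fun t ht => ?_⟩ <;>
    replace ht := Ioo_subset_Icc_self ht <;> rw [hdiscount t ht]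
  · have := power_utility_sub_le hγ0 hγ1 (hq t ht) (hx t ht) (hc0 t ht)
    linarith
  · have := power_utility_sub_self (q := q t) hγ0.ne' (hx t ht)
    rw [hfb t ht]
    linarith

/-- Deterministic verification theorem for the power-utility optimal
consumption problem after the delay reduction: if `p > 0` solves
`p' = -(γ/(1-γ)) k p - e^{-βt/(1-γ)}` with `p(T) = 1`, then for every continuous
nonnegative consumption `c` and every positive trajectory `S' = k S - c`, `S(0) = s₀ > 0`,
`∫_0^T e^{-βt} c(t)^γ/γ dt + S(T)^γ/γ ≤ (1/γ) p(0)^{1-γ} s₀^γ`, with equality for the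
feedback consumption `c = e^{-βt/(1-γ)} S / p`. -/
theorem consumption_verification
    (T γ β : ℝ) (hT : 0 < T) (hγ0 : 0 < γ) (hγ1 : γ < 1)
    (k : ℝ → ℝ) (hk : ContinuousOn k (Set.Icc 0 T))
    (p : ℝ → ℝ) (hp_pos : ∀ t ∈ Set.Icc (0 : ℝ) T, 0 < p t) (hpT : p T = 1)
    (hp : ∀ t ∈ Set.Icc (0 : ℝ) T,
      HasDerivWithinAt p (-(γ / (1 - γ)) * k t * p t - Real.exp (-(β * t) / (1 - γ)))
        (Set.Icc 0 T) t) :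
    ∀ c : ℝ → ℝ, ContinuousOn c (Set.Icc 0 T) → (∀ t ∈ Set.Icc (0 : ℝ) T, 0 ≤ c t) →
    ∀ s₀ : ℝ, 0 < s₀ →
    ∀ S : ℝ → ℝ, S 0 = s₀ → (∀ t ∈ Set.Icc (0 : ℝ) T, 0 < S t) →
      (∀ t ∈ Set.Icc (0 : ℝ) T, HasDerivWithinAt S (k t * S t - c t) (Set.Icc 0 T) t) →
      (∫ t in (0 : ℝ)..T, Real.exp (-(β * t)) * c t ^ γ / γ) + S T ^ γ / γ
          ≤ 1 / γ * p 0 ^ (1 - γ) * s₀ ^ γ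
        ∧ ((∀ t ∈ Set.Icc (0 : ℝ) T, c t = Real.exp (-(β * t) / (1 - γ)) * S t / p t) →
            (∫ t in (0 : ℝ)..T, Real.exp (-(β * t)) * c t ^ γ / γ) + S T ^ γ / γ
              = 1 / γ * p 0 ^ (1 - γ) * s₀ ^ γ) :=
  consumption_verification_general T γ β hT hγ0 hγ1 k p hp_pos hpT hp
end
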